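/- arXiv:2309.10775 — 2 statements merged into one kernel-verified Lean document; each statement's English description precedes it below -/
import Mathlib

section
/- Let α ∈ V_n(ℝ^N) and y ∈ V_k(ℝ^N). If there exists x ∈ V_k(ℝ^n) with ‖y − αx‖_F < √2, then the n×k matrix αᵀy has rank k (full column rank). -/
open Matrix

/-- Frobenius norm: sqrt(tr(AᵀA)). -/
noncomputable def frobNorm {s t : ℕ} (A : Matrix (Fin s) (Fin t) ℝ) : ℝ :=
  Real.sqrt (Matrix.trace (Aᵀ * A))

lemma dot_mulVec_self {N k : ℕ} (B : Matrix (Fin N) (Fin k) ℝ) (v : Fin k → ℝ) :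
    (B *ᵥ v) ⬝ᵥ (B *ᵥ v) = v ⬝ᵥ ((Bᵀ * B) *ᵥ v) := by
  rw [← mulVec_mulVec, dotProduct_mulVec, ← transpose_transpose B, vecMul_transpose,
    transpose_transpose, dotProduct_comm]

lemma dot_mulVec_le_trace {N k : ℕ} (B : Matrix (Fin N) (Fin k) ℝ) (v : Fin k → ℝ) :
    (B *ᵥ v) ⬝ᵥ (B *ᵥ v) ≤ Matrix.trace (Bᵀ * B) * (v ⬝ᵥ v) := by
  have hrhs : Matrix.trace (Bᵀ * B) * (v ⬝ᵥ v)
      = ∑ i, (∑ j, B i j ^ 2) * (∑ j, v j ^ 2) := by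
    simp only [dotProduct, trace, diag, mul_apply, transpose_apply]
    rw [Finset.sum_comm, Finset.sum_mul]
    congr 1; ext i; congr 1 <;> (congr 1; ext j; ring)
  rw [hrhs]
  simp only [dotProduct, mulVec, dotProduct]
  refine Finset.sum_le_sum fun i _ => ?_
  calc (∑ j, B i j * v j) * (∑ j, B i j * v j) = (∑ j, B i j * v j) ^ 2 := by ring
    _ ≤ (∑ j, B i j ^ 2) * ∑ j, v j ^ 2 := Finset.sum_mul_sq_le_sq_mul_sq _ _ _

/-- If y ∈ V_k(ℝ^N) is within distance √2 of some point αx with x ∈ V_k(ℝ^n),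
then αᵀy has full column rank k. -/
theorem rank_full_of_close {N n k : ℕ} (hkn : k ≤ n) (hnN : n ≤ N)
    (α : Matrix (Fin N) (Fin n) ℝ) (hα : αᵀ * α = 1)
    (y : Matrix (Fin N) (Fin k) ℝ) (hy : yᵀ * y = 1)
    (h : ∃ x : Matrix (Fin n) (Fin k) ℝ, xᵀ * x = 1 ∧
      frobNorm (y - α * x) < Real.sqrt 2) :
    (αᵀ * y).rank = k := by
  obtain ⟨x, hx, hlt⟩ := h
  set B := y - α * x with hB
  -- trace nonneg
  have htr0 : 0 ≤ Matrix.trace (Bᵀ * B) := by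
    simp only [trace, diag, mul_apply, transpose_apply]
    exact Finset.sum_nonneg fun j _ => Finset.sum_nonneg fun i _ => mul_self_nonneg _
  -- trace < 2
  have htr2 : Matrix.trace (Bᵀ * B) < 2 := by
    have := hlt
    rw [frobNorm, show (Real.sqrt 2) = Real.sqrt 2 from rfl] at this
    nlinarith [Real.sq_sqrt htr0, Real.sq_sqrt (by norm_num : (0:ℝ) ≤ 2),
      Real.sqrt_nonneg (Matrix.trace (Bᵀ * B)), Real.sqrt_nonneg 2]
  -- kernel trivial
  have hker : LinearMap.ker (αᵀ * y).mulVecLin = ⊥ := by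
    rw [LinearMap.ker_eq_bot']
    intro v hv
    rw [mulVecLin_apply] at hv
    have h1 : (xᵀ * (αᵀ * y)) *ᵥ v = 0 := by
      rw [← mulVec_mulVec, hv, mulVec_zero]
    have hBBv : v ⬝ᵥ ((Bᵀ * B) *ᵥ v) = 2 * (v ⬝ᵥ v) := by
      have hexp : Bᵀ * B = 1 + 1 - (xᵀ * (αᵀ * y))ᵀ - (xᵀ * (αᵀ * y)) := by
        have e1 : xᵀ * (αᵀ * (α * x)) = 1 := by
          rw [← Matrix.mul_assoc αᵀ, hα, Matrix.one_mul, hx]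
        have e2 : (xᵀ * (αᵀ * y))ᵀ = yᵀ * (α * x) := by
          simp [transpose_mul, Matrix.mul_assoc]
        rw [hB]
        simp only [transpose_sub, transpose_mul, Matrix.sub_mul, Matrix.mul_sub, Matrix.mul_assoc, e1, e2, hy]
        abel
      rw [hexp]
      simp only [sub_mulVec, add_mulVec, one_mulVec, dotProduct_sub, dotProduct_add, h1,
        dotProduct_zero]
      have h2 : v ⬝ᵥ ((xᵀ * (αᵀ * y))ᵀ *ᵥ v) = 0 := by
        rw [dotProduct_mulVec, vecMul_transpose, h1, zero_dotProduct]
      rw [h2]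
      ring
    have hle := dot_mulVec_le_trace B v
    rw [dot_mulVec_self, hBBv] at hle
    have hvv0 : 0 ≤ v ⬝ᵥ v := by
      exact Finset.sum_nonneg fun j _ => mul_self_nonneg _
    have : v ⬝ᵥ v = 0 := by nlinarith
    exact (dotProduct_self_eq_zero).mp this
  -- rank via rank-nullity
  have := LinearMap.finrank_range_add_finrank_ker (αᵀ * y).mulVecLin
  rw [hker, finrank_bot, add_zero] at this
  rw [Matrix.rank, this]
  simp [Module.finrank_pi]
end

section
/- Let A be an n×k real matrix with polar decomposition A = UH where U has orthonormal columns and H is positive semidefinite. Then the map sending A to its closest point in V_k(ℝ^n) is given by U: for every Q ∈ ℝ^{n×k} with QᵀQ = I_k, ‖A − U‖_F ≤ ‖A − Q‖_F. -/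
open Matrix

lemma trace_sum_eq {n k : ℕ} (M N : Matrix (Fin n) (Fin k) ℝ) :
    Matrix.trace (Mᵀ * N) = ∑ p : Fin k × Fin n, M p.2 p.1 * N p.2 p.1 := by
  rw [Matrix.trace, Fintype.sum_prod_type]
  simp [Matrix.mul_apply]

lemma trace_nonneg_aux {n k : ℕ} (M : Matrix (Fin n) (Fin k) ℝ) :
    0 ≤ Matrix.trace (Mᵀ * M) := by
  rw [trace_sum_eq]
  exact Finset.sum_nonneg fun p _ => mul_self_nonneg _

lemma trace_cauchy_schwarz {n k : ℕ} (M N : Matrix (Fin n) (Fin k) ℝ) :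
    Matrix.trace (Mᵀ * N) ≤
      Real.sqrt (Matrix.trace (Mᵀ * M)) * Real.sqrt (Matrix.trace (Nᵀ * N)) := by
  have h := Finset.sum_mul_sq_le_sq_mul_sq Finset.univ
    (fun p : Fin k × Fin n => M p.2 p.1) (fun p : Fin k × Fin n => N p.2 p.1)
  have hMM : Matrix.trace (Mᵀ * M) = ∑ p : Fin k × Fin n, M p.2 p.1 ^ 2 := by
    rw [trace_sum_eq]; simp [sq]
  have hNN : Matrix.trace (Nᵀ * N) = ∑ p : Fin k × Fin n, N p.2 p.1 ^ 2 := by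
    rw [trace_sum_eq]; simp [sq]
  rw [trace_sum_eq, ← Real.sqrt_mul (trace_nonneg_aux M)]
  calc (∑ p : Fin k × Fin n, M p.2 p.1 * N p.2 p.1)
      ≤ |∑ p : Fin k × Fin n, M p.2 p.1 * N p.2 p.1| := le_abs_self _
    _ = Real.sqrt ((∑ p : Fin k × Fin n, M p.2 p.1 * N p.2 p.1) ^ 2) :=
        (Real.sqrt_sq_eq_abs _).symm
    _ ≤ Real.sqrt (Matrix.trace (Mᵀ * M) * Matrix.trace (Nᵀ * N)) := by
        apply Real.sqrt_le_sqrt; rw [hMM, hNN]; exact h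

/-- The polar factor U of a full-rank matrix A = UH is the closest point to A
on the Stiefel manifold V_k(ℝ^n). -/
theorem polar_factor_is_closest {n k : ℕ} (hkn : k ≤ n)
    (A : Matrix (Fin n) (Fin k) ℝ) (hrank : A.rank = k)
    (U : Matrix (Fin n) (Fin k) ℝ) (H : Matrix (Fin k) (Fin k) ℝ)
    (hU : Uᵀ * U = 1) (hH : H.PosSemidef) (hUH : A = U * H) :
    ∀ Q : Matrix (Fin n) (Fin k) ℝ, Qᵀ * Q = 1 →
      frobNorm (A - U) ≤ frobNorm (A - Q) := by
  intro Q hQ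
  open scoped MatrixOrder in
  set S := CFC.sqrt H with hS
  open scoped MatrixOrder in
  have hSpsd : S.PosSemidef := (CFC.sqrt_nonneg H).posSemidef
  have hSsym : Sᵀ = S := by
    have := hSpsd.isHermitian
    simpa [Matrix.IsHermitian, Matrix.conjTranspose_eq_transpose_of_trivial] using this
  open scoped MatrixOrder in
  have hSsq : S * S = H := CFC.sqrt_mul_sqrt_self H hH.nonneg
  have htrH : 0 ≤ Matrix.trace H := by
    have := trace_nonneg_aux S
    rwa [hSsym, hSsq] at this
  -- key inequality
  have key : ∀ P : Matrix (Fin n) (Fin k) ℝ, Pᵀ * P = 1 →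
      Matrix.trace (Pᵀ * A) ≤ Matrix.trace H := by
    intro P hP
    have h1 : Matrix.trace (Pᵀ * A) = Matrix.trace ((P * S)ᵀ * (U * S)) := by
      rw [hUH, ← hSsq, Matrix.transpose_mul, hSsym]
      rw [show Pᵀ * (U * (S * S)) = (Pᵀ * (U * S)) * S by simp [Matrix.mul_assoc]]
      rw [Matrix.trace_mul_comm]
      simp [Matrix.mul_assoc]
    have hPS : (P * S)ᵀ * (P * S) = H := by
      rw [Matrix.transpose_mul, hSsym, show S * Pᵀ * (P * S) = S * (Pᵀ * P) * S by simp [Matrix.mul_assoc],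
        hP, mul_one, hSsq]
    have hUS : (U * S)ᵀ * (U * S) = H := by
      rw [Matrix.transpose_mul, hSsym, show S * Uᵀ * (U * S) = S * (Uᵀ * U) * S by simp [Matrix.mul_assoc],
        hU, mul_one, hSsq]
    calc Matrix.trace (Pᵀ * A) = Matrix.trace ((P * S)ᵀ * (U * S)) := h1
      _ ≤ Real.sqrt (Matrix.trace ((P * S)ᵀ * (P * S))) *
          Real.sqrt (Matrix.trace ((U * S)ᵀ * (U * S))) := trace_cauchy_schwarz _ _
      _ = Matrix.trace H := by rw [hPS, hUS, Real.mul_self_sqrt htrH]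
  have hUA : Matrix.trace (Uᵀ * A) = Matrix.trace H := by
    rw [hUH, ← Matrix.mul_assoc, hU, Matrix.one_mul]
  -- expansion of the squared distance
  have expand : ∀ P : Matrix (Fin n) (Fin k) ℝ, Pᵀ * P = 1 →
      Matrix.trace ((A - P)ᵀ * (A - P)) =
        Matrix.trace (Aᵀ * A) + (k : ℝ) - 2 * Matrix.trace (Pᵀ * A) := by
    intro P hP
    have hAP : Matrix.trace (Aᵀ * P) = Matrix.trace (Pᵀ * A) := by
      rw [← Matrix.trace_transpose (Aᵀ * P), Matrix.transpose_mul, Matrix.transpose_transpose]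
    rw [Matrix.transpose_sub, Matrix.sub_mul, Matrix.mul_sub, Matrix.mul_sub,
      Matrix.trace_sub, Matrix.trace_sub, Matrix.trace_sub, hP, Matrix.trace_one, hAP]
    simp [Fintype.card_fin]
    ring
  apply Real.sqrt_le_sqrt
  rw [expand U hU, expand Q hQ]
  have := key Q hQ
  rw [← hUA] at this
  linarith
end
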